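/- If Σ is a countable Markov shift that does NOT satisfy the F-property, then there exists a sequence of periodic invariant probability measures (μ_k) which converges on cylinders to a finitely additive set function F on cylinders that does not extend to a countably additive measure; specifically, there is a cylinder C with F(C) > Σ_{s≥1} F(Cs), where Cs denotes the extension of C by the symbol s. -/

import Mathlib

open MeasureTheory Filter Topology
open scoped NNReal ENNReal Classical

/-- Any ℕ-valued sequence has a subsequence that is constant or tends to infinity. -/
lemma aux_subseq (g : ℕ → ℕ) : ∃ ψ : ℕ → ℕ, StrictMono ψ ∧
    ((∃ a, ∀ k, g (ψ k) = a) ∨ Tendsto (fun k => g (ψ k)) atTop atTop) := by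
  by_cases h : ∃ a, {k | g k = a}.Infinite
  · obtain ⟨a, ha⟩ := h
    refine ⟨Nat.nth (fun k => g k = a), Nat.nth_strictMono ha, Or.inl ⟨a, fun k => ?_⟩⟩
    exact Nat.nth_mem_of_infinite ha k
  · refine ⟨id, strictMono_id, Or.inr ?_⟩
    push_neg at h
    rw [tendsto_atTop]
    intro b
    have hfin : {k | g k < b}.Finite := by
      have : {k | g k < b} ⊆ ⋃ a ∈ Finset.range b, {k | g k = a} := by
        intro k hk
        simp only [Set.mem_iUnion]
        exact ⟨g k, by simpa using hk, rfl⟩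
      exact Set.Finite.subset (Set.Finite.biUnion (Finset.range b).finite_toSet
        (fun a _ => (h a))) this
    obtain ⟨N, hN⟩ := hfin.bddAbove
    filter_upwards [eventually_ge_atTop (N+1)] with k hk
    by_contra hc
    have : k ∈ {k | g k < b} := by simpa using lt_of_not_ge hc
    exact absurd (hN this) (by omega)

/-- Iterated extraction: a subsequence along which every coordinate `l < q`
is either eventually constant or tends to infinity. -/
lemma aux_subseq_all (u : ℕ → ℕ → ℕ) (q : ℕ) : ∃ φ : ℕ → ℕ, StrictMono φ ∧
    ∀ l < q, (∃ a, ∀ᶠ k in atTop, u (φ k) l = a) ∨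
      Tendsto (fun k => u (φ k) l) atTop atTop := by
  induction q with
  | zero => exact ⟨id, strictMono_id, fun l hl => absurd hl (Nat.not_lt_zero l)⟩
  | succ q ih =>
    obtain ⟨φ, hφ, hprop⟩ := ih
    obtain ⟨ψ, hψ, hcase⟩ := aux_subseq (fun k => u (φ k) q)
    refine ⟨φ ∘ ψ, hφ.comp hψ, fun l hl => ?_⟩
    rcases Nat.lt_succ_iff_lt_or_eq.mp hl with hl | rfl
    · rcases hprop l hl with ⟨a, ha⟩ | ht
      · exact Or.inl ⟨a, (hψ.tendsto_atTop.eventually ha)⟩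
      · exact Or.inr (ht.comp hψ.tendsto_atTop)
    · rcases hcase with ⟨a, ha⟩ | ht
      · exact Or.inl ⟨a, Eventually.of_forall ha⟩
      · exact Or.inr ht

/-- The underlying set of the countable Markov shift with transition matrix `B`. -/
def ShiftSet (B : ℕ → ℕ → Prop) : Set (ℕ → ℕ) := {x | ∀ n, B (x n) (x (n + 1))}

/-- The countable Markov shift determined by the transition matrix `B`,
with the subspace topology of the product topology and the induced Borel structure. -/
abbrev Shift (B : ℕ → ℕ → Prop) : Type := ↥(ShiftSet B)

/-- The cylinder set determined by a finite word `w`. -/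
def cyl (B : ℕ → ℕ → Prop) (w : List ℕ) : Set (Shift B) :=
  {x | ∀ j : Fin w.length, x.val j = w.get j}

/-- The shift map. -/
def shiftMap (B : ℕ → ℕ → Prop) : Shift B → Shift B :=
  fun x => ⟨fun n => x.val (n + 1), fun n => x.property (n + 1)⟩

/-- A measure is shift invariant if the measure of the preimage under the shift of
any Borel set coincides with the measure of the set. -/
def IsShiftInvariant (B : ℕ → ℕ → Prop) (μ : Measure (Shift B)) : Prop :=
  ∀ s : Set (Shift B), MeasurableSet s → μ (shiftMap B ⁻¹' s) = μ s

/-- The F-property. -/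
def FProperty (B : ℕ → ℕ → Prop) : Prop :=
  ∀ i n : ℕ,
    {w : List ℕ | w.length = n ∧ w.head? = some i ∧ w.getLast? = some i ∧
      (cyl B w).Nonempty}.Finite

/-- The periodic measure equidistributed on the orbit of a periodic point `p` of period `m`. -/
noncomputable def periodicMeasure (B : ℕ → ℕ → Prop) (p : Shift B) (m : ℕ) :
    Measure (Shift B) :=
  (m : ℝ≥0∞)⁻¹ • ∑ j ∈ Finset.range m, Measure.dirac ((shiftMap B)^[j] p)


lemma shiftMap_iterate (B : ℕ → ℕ → Prop) (x : Shift B) (j n : ℕ) :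
    (((shiftMap B)^[j] x) : Shift B).val n = x.val (n + j) := by
  induction j generalizing x with
  | zero => rfl
  | succ j ihj =>
    rw [Function.iterate_succ_apply]
    rw [ihj]
    rfl

lemma measurable_shiftMap (B : ℕ → ℕ → Prop) : Measurable (shiftMap B) := by
  apply Measurable.subtype_mk
  apply measurable_pi_lambda
  intro n
  exact (measurable_pi_apply (n+1)).comp measurable_subtype_coe

lemma measurableSet_cyl (B : ℕ → ℕ → Prop) (w : List ℕ) :
    MeasurableSet (cyl B w) := by
  have : cyl B w = ⋂ j : Fin w.length, {x : Shift B | x.val j = w.get j} := by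
    ext x; simp [cyl, Set.mem_iInter]
  rw [this]
  apply MeasurableSet.iInter
  intro j
  show MeasurableSet ((fun x : Shift B => x.val j) ⁻¹' {w.get j})
  exact ((measurable_pi_apply (j:ℕ)).comp measurable_subtype_coe)
    (measurableSet_singleton (w.get j))

lemma periodicMeasure_apply (B : ℕ → ℕ → Prop) (p : Shift B) (q : ℕ)
    (s : Set (Shift B)) (hs : MeasurableSet s) :
    periodicMeasure B p q s = (q : ℝ≥0∞)⁻¹ *
      ((Finset.range q).filter (fun j => (shiftMap B)^[j] p ∈ s)).card := by
  classical
  simp only [periodicMeasure, Measure.smul_apply, smul_eq_mul,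
    Measure.finset_sum_apply, Measure.dirac_apply' _ hs, Set.indicator_apply,
    Pi.one_apply]
  rw [Finset.sum_boole]

lemma periodicMeasure_isProb (B : ℕ → ℕ → Prop) (p : Shift B) (q : ℕ) (hq : 0 < q) :
    IsProbabilityMeasure (periodicMeasure B p q) := by
  constructor
  rw [periodicMeasure_apply B p q Set.univ MeasurableSet.univ]
  simp only [Set.mem_univ, Finset.filter_true, Finset.card_range]
  exact ENNReal.inv_mul_cancel (by exact_mod_cast hq.ne') (by simp)

lemma periodicMeasure_invariant (B : ℕ → ℕ → Prop) (p : Shift B) (q : ℕ)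
    (hp : (shiftMap B)^[q] p = p) :
    IsShiftInvariant B (periodicMeasure B p q) := by
  intro s hs
  rw [periodicMeasure_apply B p q _ ((measurable_shiftMap B) hs),
    periodicMeasure_apply B p q s hs]
  congr 1
  norm_cast
  have key : ∀ j, ((shiftMap B)^[j] p ∈ shiftMap B ⁻¹' s) ↔ ((shiftMap B)^[j+1] p ∈ s) := by
    intro j
    rw [Set.mem_preimage, ← Function.iterate_succ_apply' (shiftMap B) j p]
  classical
  have : ∀ f : ℕ → Prop, f q = f 0 →
      ((Finset.range q).filter (fun j => f (j+1))).card =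
      ((Finset.range q).filter f).card := by
    intro f hf0
    have h1 := Finset.sum_range_succ' (fun x => if f x then (1:ℕ) else 0) q
    have h1' := Finset.sum_range_succ (fun x => if f x then (1:ℕ) else 0) q
    simp only [hf0] at h1'
    have h2 : ∑ j ∈ Finset.range q, (if f (j+1) then 1 else 0)
        = ∑ j ∈ Finset.range q, (if f j then 1 else 0) := by omega
    rw [Finset.card_filter, Finset.card_filter]
    exact h2
  have := this (fun j => (shiftMap B)^[j] p ∈ s)
    (by simp only [Function.iterate_zero, id_eq, hp])
  rw [← this]
  apply congrArg
  apply Finset.filter_congr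
  intro j _
  simp only [key j]

lemma mod_succ_aux (m q : ℕ) (h : 0 < q) : (m+1) % q = (m % q + 1) % q := by
  rcases eq_or_lt_of_le (show 1 ≤ q by omega) with h1 | h1
  · simp [← h1]
  · rw [Nat.add_mod, Nat.mod_eq_of_lt h1]

/-- The periodic point with itinerary `u`, periodized with period `q`. -/
def perPt (B : ℕ → ℕ → Prop) (u : ℕ → ℕ) (q : ℕ)
    (h : ∀ m, B (u (m % q)) (u ((m + 1) % q))) : Shift B :=
  ⟨fun n => u (n % q), h⟩

lemma perPt_fixed (B : ℕ → ℕ → Prop) (u : ℕ → ℕ) (q : ℕ)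
    (h : ∀ m, B (u (m % q)) (u ((m + 1) % q))) (hq : 0 < q) :
    (shiftMap B)^[q] (perPt B u q h) = perPt B u q h := by
  apply Subtype.ext
  funext n
  rw [shiftMap_iterate]
  show u ((n + q) % q) = u (n % q)
  rw [Nat.add_mod_right]

lemma perPt_mem_cyl (B : ℕ → ℕ → Prop) (u : ℕ → ℕ) (q : ℕ)
    (h : ∀ m, B (u (m % q)) (u ((m + 1) % q))) (j : ℕ) (w : List ℕ) :
    (shiftMap B)^[j] (perPt B u q h) ∈ cyl B w ↔
      ∀ m : Fin w.length, u ((m + j) % q) = w.get m := by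
  constructor
  · intro hx m
    have := hx m
    rwa [shiftMap_iterate] at this
  · intro hm m
    rw [shiftMap_iterate]
    exact hm m

lemma word_adm (B : ℕ → ℕ → Prop) (i q : ℕ) (hq : 0 < q) (W : List ℕ)
    (hlen : W.length = q + 1) (hhead : W.head? = some i) (hlast : W.getLast? = some i)
    (hne : (cyl B W).Nonempty) :
    (∀ m, B (W.getD (m % q) 0) (W.getD ((m + 1) % q) 0)) ∧ W.getD 0 0 = i ∧
      W.getD q 0 = i ∧ (∀ j (hj : j < W.length), W.getD j 0 = W.get ⟨j, hj⟩) := by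
  have hget : ∀ j (hj : j < W.length), W.getD j 0 = W.get ⟨j, hj⟩ := by
    intro j hj
    rw [List.getD_eq_getElem W 0 (by omega), List.get_eq_getElem]
  have hchain : ∀ j, j + 1 < q + 1 → B (W.getD j 0) (W.getD (j+1) 0) := by
    obtain ⟨x, hx⟩ := hne
    intro j hj
    have h1 : x.val j = W.getD j 0 := by
      rw [hget j (by omega)]
      exact hx ⟨j, by omega⟩
    have h2 : x.val (j+1) = W.getD (j+1) 0 := by
      rw [hget (j+1) (by omega)]
      exact hx ⟨j+1, by omega⟩
    have hb := x.property j
    rwa [h1, h2] at hb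
  have h0 : W.getD 0 0 = i := by
    rw [List.getD_eq_getElem W 0 (by omega)]
    rw [List.head?_eq_getElem?] at hhead
    rw [List.getElem?_eq_getElem (by omega)] at hhead
    exact (Option.some_injective _ hhead.symm).symm
  have hq' : W.getD q 0 = i := by
    rw [List.getD_eq_getElem W 0 (by omega)]
    rw [List.getLast?_eq_getElem?] at hlast
    have : W.length - 1 = q := by omega
    rw [this, List.getElem?_eq_getElem (by omega)] at hlast
    exact (Option.some_injective _ hlast.symm).symm
  refine ⟨fun m => ?_, h0, hq', hget⟩
  have hm : m % q < q := Nat.mod_lt _ hq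
  rw [mod_succ_aux m q hq]
  by_cases hc : m % q + 1 < q
  · rw [Nat.mod_eq_of_lt hc]
    exact hchain (m % q) (by omega)
  · have he : m % q + 1 = q := by omega
    have h00 : (m % q + 1) % q = 0 := by rw [he, Nat.mod_self]
    have hch := hchain (m % q) (by omega)
    rw [he, hq'] at hch
    rw [h00, h0]
    exact hch

/-- if a countable Markov shift does not satisfy the F-property, then there
is a sequence of periodic invariant probability measures converging on every cylinder to a
set function `F` on cylinders which is not countably additive: for some cylinder `C`,
`F(C) > ∑ₛ F(Cs)`. -/
theorem stmt13 (B : ℕ → ℕ → Prop) (hnF : ¬ FProperty B) :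
    ∃ (ν : ℕ → Measure (Shift B)) (F : List ℕ → ℝ),
      (∀ k, IsProbabilityMeasure (ν k) ∧ IsShiftInvariant B (ν k) ∧
        ∃ (p : Shift B) (m : ℕ), 0 < m ∧ (shiftMap B)^[m] p = p ∧
          ν k = periodicMeasure B p m) ∧
      (∀ w : List ℕ, w ≠ [] →
        Tendsto (fun k => (ν k (cyl B w)).toReal) atTop (𝓝 (F w))) ∧
      ∃ w : List ℕ, w ≠ [] ∧ (cyl B w).Nonempty ∧ F w > ∑' s : ℕ, F (w ++ [s]) := by
  -- Step 1: extract the infinite family of words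
  rw [FProperty] at hnF
  push_neg at hnF
  obtain ⟨i, n, hinf⟩ := hnF
  set S : Set (List ℕ) := {w : List ℕ | w.length = n ∧ w.head? = some i ∧
      w.getLast? = some i ∧ (cyl B w).Nonempty} with hS
  have hn2 : 2 ≤ n := by
    by_contra hc
    apply hinf
    apply Set.Finite.subset (Set.finite_singleton [i])
    intro w hw
    obtain ⟨hlen, hh, -, -⟩ := hw
    interval_cases n
    · rw [List.length_eq_zero_iff] at hlen; subst hlen; simp at hh
    · rw [List.length_eq_one_iff] at hlen
      obtain ⟨a, rfl⟩ := hlen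
      simp_all
  obtain ⟨q, rfl⟩ : ∃ q, n = q + 1 := ⟨n - 1, by omega⟩
  have hq : 0 < q := by omega
  -- Step 2/3: injective sequence of words, subsequence extraction
  have e := hinf.natEmbedding
  obtain ⟨φ, hφ, hcrit⟩ := aux_subseq_all (fun k m => ((e k : S) : List ℕ).getD m 0) q
  set W : ℕ → List ℕ := fun k => ((e (φ k) : S) : List ℕ) with hWdef
  have hWinj : Function.Injective W := by
    intro a b hab
    exact hφ.injective (e.injective (Subtype.ext hab))
  set u : ℕ → ℕ → ℕ := fun k m => (W k).getD m 0 with hu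
  have hcrit' : ∀ l < q, (∃ a, ∀ᶠ k in atTop, u k l = a) ∨
      Tendsto (fun k => u k l) atTop atTop := hcrit
  have hWS : ∀ k, W k ∈ S := fun k => (e (φ k)).property
  have hWlen : ∀ k, (W k).length = q + 1 := fun k => (hWS k).1
  have hWA := fun k => word_adm B i q hq (W k) (hWlen k) (hWS k).2.1 (hWS k).2.2.1
      (hWS k).2.2.2
  have hadm : ∀ k m, B (u k (m % q)) (u k ((m + 1) % q)) := fun k => (hWA k).1
  have hu0 : ∀ k, u k 0 = i := fun k => (hWA k).2.1
  have huq : ∀ k, u k q = i := fun k => (hWA k).2.2.1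
  have hget : ∀ k j (hj : j < q + 1), u k j = (W k).get ⟨j, by rw [hWlen k]; omega⟩ :=
    fun k j hj => (hWA k).2.2.2 j (by rw [hWlen k]; omega)
  set pp : ℕ → Shift B := fun k => perPt B (u k) q (hadm k) with hpp
  set ν : ℕ → Measure (Shift B) := fun k => periodicMeasure B (pp k) q with hν
  -- Step 5: the limiting symbol data
  set st : ℕ → Option ℕ := fun l =>
    if h : ∃ a, ∀ᶠ k in atTop, u k l = a then some h.choose else none with hst
  have hst_some : ∀ l a, st l = some a → ∀ᶠ k in atTop, u k l = a := by
    intro l a hla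
    simp only [hst] at hla
    by_cases h : ∃ a, ∀ᶠ k in atTop, u k l = a
    · rw [dif_pos h] at hla
      obtain rfl : h.choose = a := Option.some_injective _ hla
      exact h.choose_spec
    · rw [dif_neg h] at hla
      exact absurd hla (by simp)
  have hst_none : ∀ l, l < q → st l = none → ∀ c, ∀ᶠ k in atTop, u k l ≠ c := by
    intro l hl hnone c
    rcases hcrit' l hl with he | ht
    · exfalso
      simp only [hst] at hnone
      rw [dif_pos he] at hnone
      simp at hnone
    · exact (ht.eventually_gt_atTop c).mono fun k hk => by omega
  -- Step 6: the limit match sets and the limit function F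
  set M : List ℕ → Finset ℕ := fun w => (Finset.range q).filter
      (fun j => ∀ m : Fin w.length, st ((m + j) % q) = some (w.get m)) with hM
  set F : List ℕ → ℝ := fun w => ((M w).card : ℝ) / q with hF
  have hkey : ∀ w : List ℕ, ∀ᶠ k in atTop,
      ∀ j < q, ((shiftMap B)^[j] (pp k) ∈ cyl B w ↔ j ∈ M w) := by
    intro w
    have hPl : ∀ l, l < q → ∀ᶠ k in atTop,
        ∀ m : Fin w.length, (u k l = w.get m ↔ st l = some (w.get m)) := by
      intro l hl
      rcases Option.eq_none_or_eq_some (st l) with hop | ⟨a, hop⟩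
      · have h1 : ∀ᶠ k in atTop, ∀ m : Fin w.length, u k l ≠ w.get m :=
          eventually_all.mpr fun m => hst_none l hl hop (w.get m)
        refine h1.mono fun k hk m => ⟨fun h => absurd h (hk m), fun h => ?_⟩
        rw [hop] at h
        exact absurd h (by simp)
      · refine (hst_some l a hop).mono fun k hk m => ?_
        rw [hk, hop]
        exact ⟨fun h => by rw [h], fun h => Option.some_injective _ h⟩
    have hall : ∀ᶠ k in atTop, ∀ l ∈ Finset.range q,
        ∀ m : Fin w.length, (u k l = w.get m ↔ st l = some (w.get m)) :=
      (eventually_all_finset (Finset.range q)).mpr (fun l hlmem => hPl l (Finset.mem_range.mp hlmem))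
    refine hall.mono fun k hk j hj => ?_
    simp only [hpp]
    rw [perPt_mem_cyl]
    simp only [hM, Finset.mem_filter, Finset.mem_range]
    constructor
    · intro h
      refine ⟨hj, fun m => ?_⟩
      exact (hk _ (Finset.mem_range.mpr (Nat.mod_lt _ hq)) m).mp (h m)
    · intro h m
      exact (hk _ (Finset.mem_range.mpr (Nat.mod_lt _ hq)) m).mpr (h.2 m)
  have hval : ∀ w : List ℕ, ∀ᶠ k in atTop, (ν k (cyl B w)).toReal = F w := by
    intro w
    refine (hkey w).mono fun k hk => ?_
    have h1 : ν k (cyl B w) = (q : ℝ≥0∞)⁻¹ * ((Finset.range q).filter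
        (fun j => (shiftMap B)^[j] (pp k) ∈ cyl B w)).card :=
      periodicMeasure_apply B (pp k) q _ (measurableSet_cyl B w)
    have h2 : (Finset.range q).filter (fun j => (shiftMap B)^[j] (pp k) ∈ cyl B w)
        = M w := by
      have hMw : M w = (Finset.range q).filter
          (fun j => ∀ m : Fin w.length, st ((m + j) % q) = some (w.get m)) := by
        rw [hM]
      rw [hMw]
      apply Finset.filter_congr
      intro j hj
      rw [hMw] at hk
      have := hk j (Finset.mem_range.mp hj)
      simp only [Finset.mem_filter, Finset.mem_range] at this
      constructor
      · intro hx
        exact (this.mp hx).2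
      · intro hx
        exact this.mpr ⟨Finset.mem_range.mp hj, hx⟩
    rw [h1, h2, hF]
    rw [ENNReal.toReal_mul, ENNReal.toReal_inv]
    simp [inv_mul_eq_div]
  refine ⟨ν, F, ?_, ?_, ?_⟩
  · intro k
    refine ⟨periodicMeasure_isProb B (pp k) q hq,
      periodicMeasure_invariant B (pp k) q (perPt_fixed B (u k) q (hadm k) hq),
      pp k, q, hq, perPt_fixed B (u k) q (hadm k) hq, rfl⟩
  · intro w _
    exact Tendsto.congr' ((hval w).mono fun k hk => hk.symm) tendsto_const_nhds
  · -- Step 9: the bad cylinder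
    have hMmem : ∀ (w : List ℕ) (j : ℕ), j ∈ M w ↔ j < q ∧
        ∀ m : Fin w.length, st ((m + j) % q) = some (w.get m) := by
      intro w j
      simp [hM]
    have hex : ∃ l, l < q ∧ st l = none := by
      by_contra hc
      push_neg at hc
      have hconst : ∀ l, ∃ a, ∀ᶠ k in atTop, l < q + 1 → u k l = a := by
        intro l
        by_cases hl : l < q + 1
        · rcases Nat.lt_succ_iff_lt_or_eq.mp hl with hl' | rfl
          · rcases Option.eq_none_or_eq_some (st l) with hop | ⟨a, hop⟩
            · exact absurd hop (hc l hl')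
            · exact ⟨a, (hst_some l a hop).mono fun k hk _ => hk⟩
          · exact ⟨i, Eventually.of_forall (fun k _ => huq k)⟩
        · exact ⟨0, Eventually.of_forall (fun k hk => absurd hk hl)⟩
      choose a ha using hconst
      have hall : ∀ᶠ k in atTop, ∀ l ∈ Finset.range (q+1), l < q + 1 → u k l = a l :=
        (eventually_all_finset (Finset.range (q+1))).mpr (fun l _ => ha l)
      obtain ⟨N, hN⟩ := eventually_atTop.mp hall
      have hWeq : W N = W (N+1) := by
        apply List.ext_get (by rw [hWlen, hWlen])
        intro j hj1 hj2
        have hjq : j < q + 1 := by rw [hWlen] at hj1; omega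
        have e1 := hget N j hjq
        have e2 := hget (N+1) j hjq
        simp only [List.get_eq_getElem] at e1 e2 ⊢
        rw [← e1, ← e2, hN N le_rfl j (Finset.mem_range.mpr hjq) hjq,
          hN (N+1) (by omega) j (Finset.mem_range.mpr hjq) hjq]
      exact absurd (hWinj hWeq) (by omega)
    set js := Nat.find hex with hjs_def
    obtain ⟨hjsq, hnone⟩ : js < q ∧ st js = none := Nat.find_spec hex
    have hsome' : ∀ l, l < js → st l = some ((st l).getD 0) := by
      intro l hl
      rcases Option.eq_none_or_eq_some (st l) with hop | ⟨b, hop⟩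
      · exact absurd ⟨by omega, hop⟩ (Nat.find_min hex hl)
      · rw [hop]; rfl
    have hjs_pos : 0 < js := by
      rcases Nat.eq_zero_or_pos js with h0 | h
      · exfalso
        have hex0 : ∃ a, ∀ᶠ k in atTop, u k 0 = a := ⟨i, Eventually.of_forall hu0⟩
        have hs0 : st 0 = some hex0.choose := by
          simp only [hst]
          rw [dif_pos hex0]
        rw [h0] at hnone
        rw [hnone] at hs0
        exact absurd hs0 (by simp)
      · exact h
    set C : List ℕ := List.ofFn (fun m : Fin js => (st m).getD 0) with hC
    have hClen : C.length = js := by rw [hC, List.length_ofFn]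
    have hCget : ∀ m : Fin C.length, C.get m = (st (m : ℕ)).getD 0 := by
      intro m
      simp [hC, List.get_ofFn]
    have hCm_lt : ∀ m : Fin C.length, (m : ℕ) < js := fun m => hClen ▸ m.isLt
    have hCne : C ≠ [] := by
      intro h
      rw [h] at hClen
      simp at hClen
      omega
    have h0M : 0 ∈ M C := by
      rw [hMmem]
      refine ⟨hq, fun m => ?_⟩
      have hmlt := hCm_lt m
      rw [Nat.add_zero, Nat.mod_eq_of_lt (by omega), hCget m]
      exact hsome' m hmlt
    have hCnonempty : (cyl B C).Nonempty := by
      have hallc : ∀ᶠ k in atTop, ∀ l ∈ Finset.range js, u k l = (st l).getD 0 :=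
        (eventually_all_finset (Finset.range js)).mpr
          (fun l hl => hst_some l _ (hsome' l (Finset.mem_range.mp hl)))
      obtain ⟨N, hN⟩ := eventually_atTop.mp hallc
      refine ⟨pp N, fun m => ?_⟩
      have hmlt := hCm_lt m
      show u N ((m : ℕ) % q) = C.get m
      rw [Nat.mod_eq_of_lt (by omega), hCget m]
      exact hN N le_rfl m (Finset.mem_range.mpr hmlt)
    -- structure of M (C ++ [s])
    have happlen : ∀ s : ℕ, (C ++ [s]).length = js + 1 := by
      intro s
      rw [List.length_append, hClen]
      rfl
    have hsubset : ∀ s : ℕ, ∀ j, j ∈ M (C ++ [s]) →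
        j ∈ M C ∧ j ≠ 0 ∧ st ((js + j) % q) = some s := by
      intro s j hj
      rw [hMmem] at hj
      obtain ⟨hjq', hj2⟩ := hj
      have hMC : j ∈ M C := by
        rw [hMmem]
        refine ⟨hjq', fun m => ?_⟩
        have hm' : (m : ℕ) < (C ++ [s]).length := by
          rw [happlen]
          have := hCm_lt m
          omega
        have := hj2 ⟨m, hm'⟩
        simpa [List.get_eq_getElem, List.getElem_append_left m.isLt] using this
      have hlast : st ((js + j) % q) = some s := by
        have hm' : C.length < (C ++ [s]).length := by
          rw [happlen, hClen]
          omega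
        have := hj2 ⟨C.length, hm'⟩
        simpa [List.get_eq_getElem, List.getElem_concat_length, hClen] using this
      refine ⟨hMC, ?_, hlast⟩
      intro h0
      rw [h0, Nat.add_zero, Nat.mod_eq_of_lt hjsq, hnone] at hlast
      exact absurd hlast (by simp)
    set T : Finset ℕ := (M C).image (fun j => (st ((js + j) % q)).getD 0) with hT
    have hzero : ∀ s, s ∉ T → F (C ++ [s]) = 0 := by
      intro s hs
      have hempty : M (C ++ [s]) = ∅ := by
        apply Finset.eq_empty_of_forall_notMem
        intro j hj
        obtain ⟨hjM, -, hjlast⟩ := hsubset s j hj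
        apply hs
        rw [hT]
        exact Finset.mem_image.mpr ⟨j, hjM, by rw [hjlast]; rfl⟩
      rw [hF]
      simp [hempty]
    have htsum : ∑' s : ℕ, F (C ++ [s]) = ∑ s ∈ T, F (C ++ [s]) :=
      tsum_eq_sum hzero
    have hdisj : ∀ s ∈ T, ∀ t ∈ T, s ≠ t →
        Disjoint (M (C ++ [s])) (M (C ++ [t])) := by
      intro s _ t _ hst'
      rw [Finset.disjoint_left]
      intro j hjs' hjt'
      obtain ⟨-, -, h1⟩ := hsubset s j hjs'
      obtain ⟨-, -, h2⟩ := hsubset t j hjt'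
      rw [h1] at h2
      exact hst' (Option.some_injective _ h2)
    have hcard : ∑ s ∈ T, (M (C ++ [s])).card ≤ (M C).card - 1 := by
      rw [← Finset.card_biUnion hdisj]
      have hsub2 : T.biUnion (fun s => M (C ++ [s])) ⊆ (M C).erase 0 := by
        intro j hj
        obtain ⟨s, -, hjs'⟩ := Finset.mem_biUnion.mp hj
        obtain ⟨hjM, hj0, -⟩ := hsubset s j hjs'
        exact Finset.mem_erase.mpr ⟨hj0, hjM⟩
      calc (T.biUnion (fun s => M (C ++ [s]))).card ≤ ((M C).erase 0).card :=
            Finset.card_le_card hsub2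
        _ = (M C).card - 1 := Finset.card_erase_of_mem h0M
    have hMCpos : 0 < (M C).card := Finset.card_pos.mpr ⟨0, h0M⟩
    refine ⟨C, hCne, hCnonempty, ?_⟩
    rw [htsum]
    have hsumF : ∑ s ∈ T, F (C ++ [s]) = ((∑ s ∈ T, (M (C ++ [s])).card : ℕ) : ℝ) / q := by
      rw [hF]
      push_cast
      rw [Finset.sum_div]
    rw [hsumF, hF]
    have hqR : (0 : ℝ) < q := by exact_mod_cast hq
    show ((∑ s ∈ T, (M (C ++ [s])).card : ℕ) : ℝ) / q < ((M C).card : ℝ) / q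
    have hlt : (∑ s ∈ T, (M (C ++ [s])).card) < (M C).card := by omega
    gcongr
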